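/- arXiv:1909.13288 — 2 statements merged into one kernel-verified Lean document; each statement's English description precedes it below -/
import Mathlib

section
/- For α = 7.5, the function η ↦ B(η, α) has exactly two zeros: one zero η₁* < 0 and the zero η = 0. -/
open Real MeasureTheory Set Filter

/-- `A k η = ∫_0^1 z^k e^{-η z²} dz`. -/
noncomputable def A (k : ℕ) (η : ℝ) : ℝ :=
  ∫ z in (0:ℝ)..1, z ^ k * Real.exp (-η * z ^ 2)

/-- `B(η, α) = 3 e^{-η} / A₀(η) − (3 − 2η + 4η²/α)`. -/
noncomputable def B (η α : ℝ) : ℝ :=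
  3 * Real.exp (-η) / A 0 η - (3 - 2 * η + 4 * η ^ 2 / α)

/-!
Let `ψ = J quartic`, i.e. `ψ η = ∫₀¹ p(z) e^{-ηz²} dz` with `p z = z⁴ - z² + 2/15`. Integrating the
derivative of `((3 - 2η) z + 2η z³) e^{-ηz²}` over `[0, 1]` gives `B(η, 15/2) = -4η² ψ(η) / A₀(η)`,
so the zeros of `B(·, 7.5)` are those of `ψ`, and `ψ 0 = 0`. Factor `p z = (z² - r₁)(z² - r₂)`.
Since `d/dη (e^{rη} J g η) = e^{rη} J ((r - z²) g) η`, Rolle's theorem applied to `e^{r₂η} ψ` turns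
three zeros of `ψ` into two zeros of `K = J ((r₂ - z²) p)`, whereas `e^{r₁η} K` has derivative
`e^{r₁η} J (p²) > 0`. Hence `ψ` has at most two zeros, and the negative one comes from
`ψ(-1/20) < 0 < ψ(-1000)` and the intermediate value theorem.
-/

noncomputable def J (g : ℝ → ℝ) (η : ℝ) : ℝ :=
  ∫ z in (0 : ℝ)..1, g z * exp (-η * z ^ 2)

section WeightedIntegral

variable {g h : ℝ → ℝ}

theorem continuous_J_integrand (hg : Continuous g) (η : ℝ) :
    Continuous fun z => g z * exp (-η * z ^ 2) := by
  fun_prop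

theorem intervalIntegrable_J_integrand (hg : Continuous g) (η a b : ℝ) :
    IntervalIntegrable (fun z => g z * exp (-η * z ^ 2)) volume a b :=
  (continuous_J_integrand hg η).intervalIntegrable a b

theorem J_sub (hg : Continuous g) (hh : Continuous h) (η : ℝ) :
    J (fun z => g z - h z) η = J g η - J h η := by
  simp only [J, sub_mul]
  exact intervalIntegral.integral_sub (intervalIntegrable_J_integrand hg η 0 1)
    (intervalIntegrable_J_integrand hh η 0 1)

theorem J_const_mul (c η : ℝ) :
    J (fun z => c * g z) η = c * J g η := by
  simp only [J, mul_assoc, intervalIntegral.integral_const_mul]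

theorem J_pos (hg : Continuous g) (hnonneg : ∀ z ∈ Icc (0 : ℝ) 1, 0 ≤ g z)
    (hpos : ∃ z ∈ Icc (0 : ℝ) 1, 0 < g z) (η : ℝ) : 0 < J g η := by
  obtain ⟨z₀, hz₀, hgz₀⟩ := hpos
  exact intervalIntegral.integral_pos zero_lt_one (continuous_J_integrand hg η).continuousOn
    (fun z hz => mul_nonneg (hnonneg z (Ioc_subset_Icc_self hz)) (exp_pos _).le)
    ⟨z₀, hz₀, mul_pos hgz₀ (exp_pos _)⟩

theorem hasDerivAt_J (hg : Continuous g) (η₀ : ℝ) :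
    HasDerivAt (J g) (-J (fun z => z ^ 2 * g z) η₀) η₀ := by
  set F' : ℝ → ℝ → ℝ := fun η z => -(z ^ 2 * g z * exp (-η * z ^ 2))
  have hF' : Continuous fun q : ℝ × ℝ => F' q.1 q.2 := by fun_prop
  obtain ⟨C, hC⟩ := ((isCompact_closedBall η₀ 1).prod (isCompact_uIcc (a := 0) (b := 1))
    ).exists_bound_of_continuousOn hF'.continuousOn
  have hderiv (z η : ℝ) : HasDerivAt (fun η => g z * exp (-η * z ^ 2)) (F' η z) η := by
    have hlin : HasDerivAt (fun η : ℝ => -η * z ^ 2) (-z ^ 2) η := by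
      simpa using (hasDerivAt_neg η).mul_const (z ^ 2)
    exact (hlin.exp.const_mul (g z)).congr_deriv (by simp only [F']; ring)
  have hdom := intervalIntegral.hasDerivAt_integral_of_dominated_loc_of_deriv_le
    (bound := fun _ => C) (Metric.closedBall_mem_nhds η₀ one_pos)
    (Eventually.of_forall fun η => (continuous_J_integrand hg η).aestronglyMeasurable)
    (intervalIntegrable_J_integrand hg η₀ 0 1)
    (hF'.comp (Continuous.prodMk_right η₀)).aestronglyMeasurable
    (ae_of_all _ fun z hz η hη => hC (η, z) ⟨hη, uIoc_subset_uIcc hz⟩)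
    intervalIntegrable_const (ae_of_all _ fun z _ η _ => hderiv z η)
  have h := hdom.2
  simp only [F', intervalIntegral.integral_neg] at h
  exact h

theorem continuous_J (hg : Continuous g) : Continuous (J g) :=
  continuous_iff_continuousAt.2 fun η => (hasDerivAt_J hg η).continuousAt

theorem hasDerivAt_exp_mul_J (r : ℝ) (hg : Continuous g) (η : ℝ) :
    HasDerivAt (fun η => exp (r * η) * J g η)
      (exp (r * η) * J (fun z => (r - z ^ 2) * g z) η) η := by
  have hexp : HasDerivAt (fun η => exp (r * η)) (exp (r * η) * r) η := by
    simpa using ((hasDerivAt_id η).const_mul r).exp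
  refine (hexp.mul (hasDerivAt_J hg η)).congr_deriv ?_
  simp only [sub_mul]
  rw [J_sub (g := fun z => r * g z) (by fun_prop) (by fun_prop), J_const_mul]
  ring

theorem exists_J_eq_zero_of_J_eq_zero (r : ℝ) (hg : Continuous g) {x y : ℝ} (hxy : x < y)
    (hx : J g x = 0) (hy : J g y = 0) : ∃ u ∈ Ioo x y, J (fun z => (r - z ^ 2) * g z) u = 0 := by
  have hΦ := hasDerivAt_exp_mul_J r hg
  obtain ⟨u, hu, hΦu⟩ := exists_hasDerivAt_eq_zero hxy
    (HasDerivAt.continuousOn fun η _ => hΦ η) (by simp [hx, hy]) fun η _ => hΦ η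
  exact ⟨u, hu, (mul_eq_zero.1 hΦu).resolve_left (exp_ne_zero _)⟩

end WeightedIntegral

theorem no_three_zeros_J_factored {r₁ r₂ z₀ : ℝ} (hz₀ : z₀ ∈ Icc (0 : ℝ) 1)
    (hq₀ : (z₀ ^ 2 - r₁) * (z₀ ^ 2 - r₂) ≠ 0) {x y w : ℝ} (hxy : x < y) (hyw : y < w)
    (hx : J (fun z => (z ^ 2 - r₁) * (z ^ 2 - r₂)) x = 0)
    (hy : J (fun z => (z ^ 2 - r₁) * (z ^ 2 - r₂)) y = 0)
    (hw : J (fun z => (z ^ 2 - r₁) * (z ^ 2 - r₂)) w = 0) : False := by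
  obtain ⟨u, hu, hKu⟩ := exists_J_eq_zero_of_J_eq_zero r₂ (by fun_prop) hxy hx hy
  obtain ⟨v, hv, hKv⟩ := exists_J_eq_zero_of_J_eq_zero r₂ (by fun_prop) hyw hy hw
  have hsq (z : ℝ) : (r₁ - z ^ 2) * ((r₂ - z ^ 2) * ((z ^ 2 - r₁) * (z ^ 2 - r₂)))
      = ((z ^ 2 - r₁) * (z ^ 2 - r₂)) ^ 2 := by ring
  have hmono := strictMono_of_hasDerivAt_pos
    (hasDerivAt_exp_mul_J r₁ (g := fun z => (r₂ - z ^ 2) * ((z ^ 2 - r₁) * (z ^ 2 - r₂)))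
      (by fun_prop))
    fun η => mul_pos (exp_pos _) (J_pos (by fun_prop)
      (fun z _ => by rw [hsq]; positivity) ⟨z₀, hz₀, by rw [hsq]; positivity⟩ η)
  simpa [hKu, hKv] using hmono (hu.2.trans hv.1)

theorem eq_or_eq_of_no_three {α : Type*} [LinearOrder α] {p : α → Prop}
    (hp : ∀ x y w, x < y → y < w → p x → p y → p w → False) {a b c : α} (hab : a < b)
    (ha : p a) (hb : p b) (hc : p c) : c = a ∨ c = b := by
  rcases lt_trichotomy c a with hca | rfl | hac
  · exact (hp c a b hca hab hc ha hb).elim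
  · exact Or.inl rfl
  rcases lt_trichotomy c b with hcb | rfl | hbc
  · exact (hp a c b hac hcb ha hc hb).elim
  · exact Or.inr rfl
  · exact (hp a b c hab hbc ha hb hc).elim

noncomputable def quartic (z : ℝ) : ℝ := z ^ 4 - z ^ 2 + 2 / 15

@[fun_prop]
theorem continuous_quartic : Continuous quartic := by
  unfold quartic; fun_prop

theorem neg_one_div_eight_le_quartic (z : ℝ) : -(1 / 8) ≤ quartic z := by
  unfold quartic; nlinarith [sq_nonneg (z ^ 2 - 1 / 2)]

theorem quartic_nonneg_of_le {z : ℝ} (hz : 23 / 25 ≤ z) : 0 ≤ quartic z := by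
  have hz2 : (23 / 25) ^ 2 ≤ z ^ 2 := by gcongr
  unfold quartic
  nlinarith [mul_nonneg (sub_nonneg.2 hz2) (by linarith : (0 : ℝ) ≤ z ^ 2 - 1 / 5)]

theorem quartic_eq_mul :
    quartic = fun z => (z ^ 2 - (1 - √(7 / 15)) / 2) * (z ^ 2 - (1 + √(7 / 15)) / 2) := by
  funext z
  have hsqrt : √(7 / 15) ^ 2 = 7 / 15 := sq_sqrt (by norm_num)
  unfold quartic
  linear_combination (1 / 4 : ℝ) * hsqrt

theorem no_three_zeros_J_quartic {x y w : ℝ} (hxy : x < y) (hyw : y < w)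
    (hx : J quartic x = 0) (hy : J quartic y = 0) (hw : J quartic w = 0) : False := by
  rw [quartic_eq_mul] at hx hy hw
  refine no_three_zeros_J_factored (z₀ := 1 / 2) ⟨by norm_num, by norm_num⟩ ?_
    hxy hyw hx hy hw
  rw [← congrFun quartic_eq_mul (1 / 2)]
  norm_num [quartic]

theorem hasDerivAt_B_antiderivative (η z : ℝ) :
    HasDerivAt (fun z => ((3 - 2 * η) * z + 2 * η * z ^ 3) * exp (-η * z ^ 2))
      ((3 - 2 * η + 8 * η ^ 2 / 15 - 4 * η ^ 2 * quartic z) * exp (-η * z ^ 2)) z := by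
  have hpoly := ((hasDerivAt_id z).const_mul (3 - 2 * η)).add
    ((hasDerivAt_pow 3 z).const_mul (2 * η))
  have hexp := ((hasDerivAt_pow 2 z).const_mul (-η)).exp
  refine (hpoly.mul hexp).congr_deriv ?_
  simp only [quartic, id, Pi.add_apply]
  push_cast
  ring

theorem three_mul_exp_neg_eq (η : ℝ) :
    3 * exp (-η) = (3 - 2 * η + 8 * η ^ 2 / 15) * A 0 η - 4 * η ^ 2 * J quartic η := by
  have hFTC := intervalIntegral.integral_eq_sub_of_hasDerivAt
    (fun z _ => hasDerivAt_B_antiderivative η z)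
    (intervalIntegrable_J_integrand
      (g := fun z => 3 - 2 * η + 8 * η ^ 2 / 15 - 4 * η ^ 2 * quartic z) (by fun_prop) η 0 1)
  have hA : A 0 η = J (fun _ => 1) η := by simp [A, J]
  rw [hA, ← J_const_mul, ← J_const_mul, ← J_sub (by fun_prop) (by fun_prop)]
  simp only [J, mul_one]
  rw [hFTC]
  simp

theorem A_zero_pos (η : ℝ) : 0 < A 0 η :=
  J_pos (g := fun z => z ^ 0) (by fun_prop) (fun _ _ => by simp) ⟨0, by simp, by simp⟩ η

theorem B_eq (η : ℝ) : B η 7.5 = -4 * η ^ 2 * J quartic η / A 0 η := by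
  have hA := (A_zero_pos η).ne'
  rw [B, three_mul_exp_neg_eq]
  field_simp
  ring

theorem J_quartic_zero : J quartic 0 = 0 := by
  simp (disch := exact Continuous.intervalIntegrable (by fun_prop) _ _) only [J, quartic,
    neg_zero, zero_mul, exp_zero, mul_one, intervalIntegral.integral_add,
    intervalIntegral.integral_sub, integral_pow, intervalIntegral.integral_const]
  norm_num

theorem B_eq_zero_iff (η : ℝ) : B η 7.5 = 0 ↔ J quartic η = 0 := by
  rcases eq_or_ne η 0 with rfl | hη
  · simp [B_eq, J_quartic_zero]
  · simp [B_eq, hη, (A_zero_pos η).ne']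

theorem J_quartic_neg : J quartic (-1 / 20) < 0 := by
  have hbound : ∀ z ∈ Icc (0 : ℝ) 1, quartic z * exp (-(-1 / 20) * z ^ 2)
      ≤ quartic z + 1 / 20 * (z ^ 2 * quartic z) + 1 / 400 * (z ^ 4 * (z ^ 4 + 2 / 15)) := by
    rintro z ⟨hz₀, hz₁⟩
    set x := z ^ 2 / 20 with hx
    have hx₁ : |x| ≤ 1 := by rw [abs_le]; constructor <;> nlinarith
    have hexp_ge : 0 ≤ exp x - 1 - x := by linarith [add_one_le_exp x]
    have hexp_le := (abs_le.1 (abs_exp_sub_one_sub_id_le hx₁)).2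
    have hquartic : quartic z ≤ z ^ 4 + 2 / 15 := by unfold quartic; nlinarith [sq_nonneg z]
    calc quartic z * exp (-(-1 / 20) * z ^ 2)
        = quartic z * (1 + x) + quartic z * (exp x - 1 - x) := by rw [hx]; ring_nf
      _ ≤ quartic z * (1 + x) + (z ^ 4 + 2 / 15) * x ^ 2 := by
        nlinarith [mul_le_mul_of_nonneg_right hquartic hexp_ge,
          mul_le_mul_of_nonneg_left hexp_le (by positivity : (0 : ℝ) ≤ z ^ 4 + 2 / 15)]
      _ = _ := by rw [hx]; ring
  calc J quartic (-1 / 20)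
      ≤ ∫ z in (0 : ℝ)..1,
          quartic z + 1 / 20 * (z ^ 2 * quartic z) + 1 / 400 * (z ^ 4 * (z ^ 4 + 2 / 15)) :=
        intervalIntegral.integral_mono_on zero_le_one
          (intervalIntegrable_J_integrand (by fun_prop) _ 0 1)
          (Continuous.intervalIntegrable (by fun_prop) 0 1) hbound
    _ < 0 := by
        simp (disch := exact Continuous.intervalIntegrable (by fun_prop) _ _) only [quartic,
          intervalIntegral.integral_add, intervalIntegral.integral_sub,
          intervalIntegral.integral_const_mul, integral_pow, intervalIntegral.integral_const,
          mul_add, mul_sub, ← pow_add, ← mul_assoc]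
        norm_num

theorem lt_integral_quartic_mul_affine :
    23 / 25 / 8 < ∫ z in (23 / 25 : ℝ)..1, quartic z * (1 + 1000 * (z ^ 2 - (23 / 25) ^ 2)) := by
  have h (z : ℝ) : quartic z * (1 + 1000 * (z ^ 2 - (23 / 25) ^ 2))
      = 1000 * z ^ 6 - 9227 / 5 * z ^ 4 + 14681 / 15 * z ^ 2 - 2818 / 25 := by
    unfold quartic; ring
  simp_rw [h]
  simp (disch := exact Continuous.intervalIntegrable (by fun_prop) _ _) only [
    intervalIntegral.integral_add, intervalIntegral.integral_sub,
    intervalIntegral.integral_const_mul, integral_pow, intervalIntegral.integral_const]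
  norm_num

theorem J_quartic_pos : 0 < J quartic (-1000) := by
  set E := exp (1000 * (23 / 25) ^ 2)
  have hE : 0 < E := exp_pos _
  have hint (a b : ℝ) : IntervalIntegrable (fun z => quartic z * exp (1000 * z ^ 2)) volume a b :=
    Continuous.intervalIntegrable (by fun_prop) a b
  have hleft : ∀ z ∈ Icc 0 (23 / 25), -(E / 8) ≤ quartic z * exp (1000 * z ^ 2) := by
    rintro z ⟨hz₀, hz⟩
    have hexp : exp (1000 * z ^ 2) ≤ E := exp_le_exp.2 (by gcongr)
    nlinarith [mul_nonneg (by linarith [neg_one_div_eight_le_quartic z] : 0 ≤ quartic z + 1 / 8)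
      (exp_pos (1000 * z ^ 2)).le]
  -- `exp y ≥ 1 + y` captures the growth of `exp (1000 z²)` beyond `E` on `[23/25, 1]`
  have hright : ∀ z ∈ Icc (23 / 25) 1,
      E * (quartic z * (1 + 1000 * (z ^ 2 - (23 / 25) ^ 2)))
        ≤ quartic z * exp (1000 * z ^ 2) := by
    rintro z ⟨hz, -⟩
    have hexp : E * (1 + 1000 * (z ^ 2 - (23 / 25) ^ 2)) ≤ exp (1000 * z ^ 2) := by
      rw [show 1000 * z ^ 2 = 1000 * (23 / 25) ^ 2 + 1000 * (z ^ 2 - (23 / 25) ^ 2) by ring,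
        exp_add]
      gcongr
      linarith [add_one_le_exp (1000 * (z ^ 2 - (23 / 25) ^ 2))]
    nlinarith [mul_le_mul_of_nonneg_left hexp (quartic_nonneg_of_le hz)]
  have hleft_int := intervalIntegral.integral_mono_on (by norm_num) intervalIntegrable_const
    (hint 0 (23 / 25)) hleft
  have hright_int := intervalIntegral.integral_mono_on (by norm_num)
    (Continuous.intervalIntegrable (by fun_prop) (23 / 25) 1) (hint (23 / 25) 1) hright
  rw [intervalIntegral.integral_const, smul_eq_mul] at hleft_int
  rw [intervalIntegral.integral_const_mul] at hright_int
  simp only [J, neg_neg]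
  rw [← intervalIntegral.integral_add_adjacent_intervals (hint 0 (23 / 25)) (hint (23 / 25) 1)]
  nlinarith [mul_lt_mul_of_pos_left lt_integral_quartic_mul_affine hE]

/-- For `α = 7.5`, `η ↦ B(η, α)` has exactly two zeros: one negative zero and `η = 0`. -/
theorem stmt_1 :
    ∃ η₁ : ℝ, η₁ < 0 ∧ {η : ℝ | B η 7.5 = 0} = ({η₁, 0} : Set ℝ) := by
  obtain ⟨η₁, hη₁, hzero⟩ := intermediate_value_Icc' (by norm_num : (-1000 : ℝ) ≤ -1 / 20)
    (continuous_J (by fun_prop)).continuousOn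
    ⟨J_quartic_neg.le, J_quartic_pos.le⟩
  have hneg : η₁ < 0 := hη₁.2.trans_lt (by norm_num)
  refine ⟨η₁, hneg, ?_⟩
  ext η
  simp only [mem_ofPred_eq, B_eq_zero_iff, mem_insert_iff, mem_singleton_iff]
  refine ⟨fun h => eq_or_eq_of_no_three (fun _ _ _ => no_three_zeros_J_quartic) hneg hzero
    J_quartic_zero h, ?_⟩
  rintro (rfl | rfl)
  exacts [hzero, J_quartic_zero]
end

section
/- There exists α* ∈ (20/3, 7.5) such that: for every α with α* < α < 7.5, the function η ↦ B(η, α) has exactly three zeros, namely two distinct negative zeros and the zero η = 0; for α = α*, it has exactly two zeros, namely one negative zero and the zero η = 0; and for every α with 0 < α < α*, its only zero is η = 0. -/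
open Real MeasureTheory Set Filter

/-!
Integration by parts gives `3e^{-η} - (3 - 2η) A₀ = 4η² G` with `G = A₂ - A₄`, so
`B(η, α) = 4η² (αG - A₀) / (αA₀)` and the nonzero zeros of `B(·, α)` are the solutions of
`alphaCrit η = α`, where `alphaCrit = A₀ / G`. Its derivative is `Q / G²`, and `e^η Q` is
strictly increasing because its derivative is `e^η` times a Cauchy–Schwarz gap. Hence `alphaCrit`
strictly decreases up to the unique zero `e` of `Q` and strictly increases afterwards, and
`α* = alphaCrit e`. Truncated Taylor expansions of `e^{wz²}` locate `e` in `[-2.19, -2.16]` and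
give `alphaCrit (-5) > 15/2 = alphaCrit 0` and `alphaCrit > 20/3` on `[-2.19, -2.16]`.
-/

open scoped Nat

lemma continuous_A_integrand (k : ℕ) (η : ℝ) :
    Continuous fun z : ℝ => z ^ k * exp (-η * z ^ 2) := by
  fun_prop

lemma intervalIntegrable_A_integrand (k : ℕ) (η : ℝ) :
    IntervalIntegrable (fun z : ℝ => z ^ k * exp (-η * z ^ 2)) volume 0 1 :=
  (continuous_A_integrand k η).intervalIntegrable _ _

lemma A_pos (k : ℕ) (η : ℝ) : 0 < A k η :=
  intervalIntegral.intervalIntegral_pos_of_pos_on (intervalIntegrable_A_integrand k η)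
    (fun z hz => by have := hz.1; positivity) one_pos

lemma A_zero_right (k : ℕ) : A k 0 = 1 / (k + 1) := by
  simp [A, integral_pow]

lemma hasDerivAt_A (k : ℕ) (η₀ : ℝ) : HasDerivAt (A k) (-A (k + 2) η₀) η₀ := by
  have hderiv : ∀ η z : ℝ, HasDerivAt (fun η => z ^ k * exp (-η * z ^ 2))
      (-(z ^ (k + 2) * exp (-η * z ^ 2))) η := fun η z => by
    refine (((hasDerivAt_neg η).mul_const (z ^ 2)).exp.const_mul (z ^ k)).congr_deriv ?_
    ring
  have hbound : ∀ z ∈ uIoc (0:ℝ) 1, ∀ η ∈ Metric.ball η₀ 1,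
      ‖-(z ^ (k + 2) * exp (-η * z ^ 2))‖ ≤ exp (|η₀| + 1) := by
    intro z hz η hη
    rw [uIoc_of_le zero_le_one] at hz
    have hz₀ := hz.1.le
    have hz₂ : z ^ 2 ≤ 1 := pow_le_one₀ hz₀ hz.2
    have hη' : |η| < |η₀| + 1 := by
      have := abs_sub_abs_le_abs_sub η η₀
      rw [Metric.mem_ball, Real.dist_eq] at hη
      linarith
    rw [norm_neg, norm_mul, Real.norm_of_nonneg (by positivity : 0 ≤ z ^ (k + 2)),
      Real.norm_of_nonneg (exp_pos _).le]
    calc z ^ (k + 2) * exp (-η * z ^ 2) ≤ 1 * exp (|η₀| + 1) := by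
          gcongr
          · exact pow_le_one₀ hz₀ hz.2
          · have := mul_le_mul_of_nonneg_right (neg_le_abs η) (sq_nonneg z)
            nlinarith [abs_nonneg η]
      _ = exp (|η₀| + 1) := one_mul _
  have key := intervalIntegral.hasDerivAt_integral_of_dominated_loc_of_deriv_le
    (Metric.ball_mem_nhds η₀ one_pos)
    (Eventually.of_forall fun η => (continuous_A_integrand k η).aestronglyMeasurable)
    (intervalIntegrable_A_integrand k η₀)
    (continuous_A_integrand (k + 2) η₀).neg.aestronglyMeasurable
    (Eventually.of_forall hbound) intervalIntegrable_const
    (Eventually.of_forall fun z _ η _ => hderiv η z)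
  have := key.2
  rw [intervalIntegral.integral_neg] at this
  exact this

lemma continuous_A (k : ℕ) : Continuous (A k) :=
  continuous_iff_continuousAt.2 fun η => (hasDerivAt_A k η).continuousAt

lemma A_recurrence (k : ℕ) (η : ℝ) :
    (k + 1) * A k η - 2 * η * A (k + 2) η = exp (-η) := by
  have hderiv : ∀ z ∈ uIcc (0:ℝ) 1, HasDerivAt (fun z => z ^ (k + 1) * exp (-η * z ^ 2))
      ((k + 1) * (z ^ k * exp (-η * z ^ 2)) - 2 * η * (z ^ (k + 2) * exp (-η * z ^ 2))) z := by
    intro z _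
    refine ((hasDerivAt_pow (k + 1) z).fun_mul
      ((hasDerivAt_pow 2 z).const_mul (-η)).exp).congr_deriv ?_
    simp only [Nat.add_sub_cancel, Nat.cast_add, Nat.cast_one]
    ring
  have hint₁ := (intervalIntegrable_A_integrand k η).const_mul (k + 1)
  have hint₂ := (intervalIntegrable_A_integrand (k + 2) η).const_mul (2 * η)
  have := intervalIntegral.integral_eq_sub_of_hasDerivAt hderiv (hint₁.sub hint₂)
  rw [intervalIntegral.integral_sub hint₁ hint₂, intervalIntegral.integral_const_mul,
    intervalIntegral.integral_const_mul] at this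
  simpa [A] using this

lemma integral_listSum_mul_exp (l : List (ℝ × ℕ)) (η : ℝ) :
    ∫ z in (0:ℝ)..1, (l.map fun c => c.1 * z ^ c.2).sum * exp (-η * z ^ 2)
      = (l.map fun c => c.1 * A c.2 η).sum := by
  induction l with
  | nil => simp
  | cons c l ih =>
    have hrest : IntervalIntegrable
        (fun z : ℝ => (l.map fun c => c.1 * z ^ c.2).sum * exp (-η * z ^ 2)) volume 0 1 :=
      Continuous.intervalIntegrable (by fun_prop) _ _
    simp only [List.map_cons, List.sum_cons, add_mul, mul_assoc]
    rw [intervalIntegral.integral_add ((intervalIntegrable_A_integrand c.2 η).const_mul c.1) hrest,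
      intervalIntegral.integral_const_mul, ih, A]

noncomputable def G (η : ℝ) : ℝ := A 2 η - A 4 η

lemma G_pos (η : ℝ) : 0 < G η := by
  rw [G, A, A, ← intervalIntegral.integral_sub (intervalIntegrable_A_integrand 2 η)
    (intervalIntegrable_A_integrand 4 η)]
  refine intervalIntegral.integral_pos one_pos (by fun_prop) (fun z hz => ?_)
    ⟨1 / 2, by norm_num, by norm_num [exp_pos]⟩
  have : z ^ 4 ≤ z ^ 2 := pow_le_pow_of_le_one hz.1.le hz.2 (by norm_num)
  have := exp_pos (-η * z ^ 2)
  nlinarith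

lemma continuous_G : Continuous G := (continuous_A 2).sub (continuous_A 4)

lemma three_mul_exp_neg_sub_eq (η : ℝ) :
    3 * exp (-η) - (3 - 2 * η) * A 0 η = 4 * η ^ 2 * G η := by
  have r₀ := A_recurrence 0 η
  have r₂ := A_recurrence 2 η
  push_cast at r₀ r₂
  rw [G]
  linear_combination (2 * η - 3) * r₀ - 2 * η * r₂

noncomputable def alphaCrit (η : ℝ) : ℝ := A 0 η / G η

lemma setOf_B_eq_zero {α : ℝ} (hα : 0 < α) :
    {η | B η α = 0} = insert 0 {η | alphaCrit η = α} := by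
  ext η
  have hA := A_pos 0 η
  have hB : B η α = 4 * η ^ 2 * (α * G η - A 0 η) / (α * A 0 η) := by
    rw [B]
    field_simp
    linear_combination α * three_mul_exp_neg_sub_eq η
  rw [mem_ofPred_eq, hB, mem_insert_iff, mem_ofPred_eq, alphaCrit, div_eq_iff (G_pos η).ne',
    eq_comm (a := A 0 η)]
  simp [hα.ne', hA.ne', sub_eq_zero]

lemma continuous_alphaCrit : Continuous alphaCrit :=
  (continuous_A 0).div continuous_G fun η => (G_pos η).ne'

lemma alphaCrit_zero : alphaCrit 0 = 15 / 2 := by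
  norm_num [alphaCrit, G, A_zero_right]

noncomputable def Q (η : ℝ) : ℝ := A 0 η * (A 4 η - A 6 η) - A 2 η * G η

lemma continuous_Q : Continuous Q :=
  ((continuous_A 0).mul ((continuous_A 4).sub (continuous_A 6))).sub
    ((continuous_A 2).mul continuous_G)

lemma hasDerivAt_alphaCrit (η : ℝ) : HasDerivAt alphaCrit (Q η / G η ^ 2) η := by
  refine ((hasDerivAt_A 0 η).div ((hasDerivAt_A 2 η).fun_sub (hasDerivAt_A 4 η))
    (G_pos η).ne').congr_deriv ?_
  rw [Q, G]
  ring

lemma hasDerivAt_Q (η : ℝ) :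
    HasDerivAt Q (A 2 η * A 4 η - A 0 η * A 6 η + A 0 η * A 8 η - A 4 η ^ 2) η := by
  have h := fun k => hasDerivAt_A k η
  refine (((h 0).fun_mul ((h 4).fun_sub (h 6))).fun_sub
    ((h 2).fun_mul ((h 2).fun_sub (h 4)))).congr_deriv ?_
  ring

lemma sq_G_lt (η : ℝ) : G η ^ 2 < A 0 η * (A 4 η - 2 * A 6 η + A 8 η) := by
  set a := A 0 η with ha
  set g := G η with hg
  have h := integral_listSum_mul_exp
    [(g ^ 2, 0), (-2 * a * g, 2), (a ^ 2 + 2 * a * g, 4), (-2 * a ^ 2, 6), (a ^ 2, 8)] η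
  simp only [List.map_cons, List.map_nil, List.sum_cons, List.sum_nil] at h
  have hpos : 0 < ∫ z in (0:ℝ)..1, (a * (z ^ 2 - z ^ 4) - g) ^ 2 * exp (-η * z ^ 2) :=
    intervalIntegral.integral_pos one_pos (by fun_prop) (fun z _ => by positivity)
      ⟨1, by simp, by simpa using mul_pos (pow_pos (G_pos η) 2) (exp_pos (-η))⟩
  have hint : ∫ z in (0:ℝ)..1, (a * (z ^ 2 - z ^ 4) - g) ^ 2 * exp (-η * z ^ 2)
      = a * (a * (A 4 η - 2 * A 6 η + A 8 η) - g ^ 2) := by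
    convert h using 1
    · exact intervalIntegral.integral_congr fun z _ => by ring
    · rw [← ha, hg, G]
      ring
  rw [hint] at hpos
  nlinarith [A_pos 0 η]

lemma strictMono_exp_mul_Q : StrictMono fun η => exp η * Q η := by
  refine strictMono_of_deriv_pos fun η => ?_
  rw [((hasDerivAt_exp η).fun_mul (hasDerivAt_Q η)).deriv]
  have hgap : 0 < Q η + (A 2 η * A 4 η - A 0 η * A 6 η + A 0 η * A 8 η - A 4 η ^ 2) := by
    have := sq_G_lt η
    rw [Q]
    rw [G] at this ⊢
    linarith
  rw [← mul_add]
  exact mul_pos (exp_pos η) hgap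

lemma Q_neg_of_lt {e η : ℝ} (he : Q e = 0) (h : η < e) : Q η < 0 := by
  have := strictMono_exp_mul_Q h
  simp only [he, mul_zero] at this
  exact neg_of_mul_neg_right this (exp_pos η).le

lemma Q_pos_of_gt {e η : ℝ} (he : Q e = 0) (h : e < η) : 0 < Q η := by
  have := strictMono_exp_mul_Q h
  simp only [he, mul_zero] at this
  exact pos_of_mul_pos_right this (exp_pos η).le

lemma alphaCrit_strictAntiOn {e : ℝ} (he : Q e = 0) : StrictAntiOn alphaCrit (Iic e) := by
  refine strictAntiOn_of_deriv_neg (convex_Iic e) continuous_alphaCrit.continuousOn fun η hη => ?_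
  rw [interior_Iic] at hη
  rw [(hasDerivAt_alphaCrit η).deriv]
  exact div_neg_of_neg_of_pos (Q_neg_of_lt he hη) (pow_pos (G_pos η) 2)

lemma alphaCrit_strictMonoOn {e : ℝ} (he : Q e = 0) : StrictMonoOn alphaCrit (Ici e) := by
  refine strictMonoOn_of_deriv_pos (convex_Ici e) continuous_alphaCrit.continuousOn fun η hη => ?_
  rw [interior_Ici] at hη
  rw [(hasDerivAt_alphaCrit η).deriv]
  exact div_pos (Q_pos_of_gt he hη) (pow_pos (G_pos η) 2)

section Valley

variable {f : ℝ → ℝ} {e : ℝ}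

lemma apply_le_of_valley (hanti : StrictAntiOn f (Iic e)) (hmono : StrictMonoOn f (Ici e))
    (x : ℝ) : f e ≤ f x := by
  rcases le_total x e with h | h
  · exact hanti.antitoneOn h self_mem_Iic h
  · exact hmono.monotoneOn self_mem_Ici h h

lemma setOf_apply_eq_eq_empty_of_valley (hanti : StrictAntiOn f (Iic e))
    (hmono : StrictMonoOn f (Ici e)) {α : ℝ} (hα : α < f e) : {x | f x = α} = ∅ :=
  eq_empty_iff_forall_notMem.2 fun x hx => (apply_le_of_valley hanti hmono x).not_gt (hx ▸ hα)

lemma setOf_apply_eq_min_of_valley (hanti : StrictAntiOn f (Iic e))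
    (hmono : StrictMonoOn f (Ici e)) : {x | f x = f e} = {e} := by
  ext x
  refine ⟨fun hx => ?_, fun hx => hx ▸ rfl⟩
  rcases le_total x e with h | h
  · exact hanti.injOn h self_mem_Iic hx
  · exact hmono.injOn h self_mem_Ici hx

lemma exists_setOf_apply_eq_pair_of_valley (hf : Continuous f) (hanti : StrictAntiOn f (Iic e))
    (hmono : StrictMonoOn f (Ici e)) {a b α : ℝ} (hae : a ≤ e) (heb : e ≤ b) (hα : f e < α)
    (ha : α < f a) (hb : α < f b) :
    ∃ x₁ x₂, a < x₁ ∧ x₁ < e ∧ e < x₂ ∧ x₂ < b ∧ {x | f x = α} = {x₁, x₂} := by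
  obtain ⟨x₁, ⟨hax₁, hx₁e⟩, hfx₁⟩ :=
    intermediate_value_Icc' hae hf.continuousOn ⟨hα.le, ha.le⟩
  obtain ⟨x₂, ⟨hex₂, hx₂b⟩, hfx₂⟩ :=
    intermediate_value_Icc heb hf.continuousOn ⟨hα.le, hb.le⟩
  refine ⟨x₁, x₂, hax₁.lt_of_ne ?_, hx₁e.lt_of_ne ?_, hex₂.lt_of_ne ?_, hx₂b.lt_of_ne ?_, ?_⟩
  · rintro rfl; exact ha.ne' hfx₁
  · rintro rfl; exact hα.ne hfx₁
  · rintro rfl; exact hα.ne hfx₂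
  · rintro rfl; exact hb.ne' hfx₂
  ext x
  simp only [mem_ofPred_eq, mem_insert_iff, mem_singleton_iff]
  refine ⟨fun hx => ?_, by rintro (rfl | rfl) <;> assumption⟩
  rcases le_total x e with h | h
  · exact .inl (hanti.injOn h hx₁e (hx.trans hfx₁.symm))
  · exact .inr (hmono.injOn h hex₂ (hx.trans hfx₂.symm))

end Valley

lemma exp_le_sum_add_pow_mul {x E : ℝ} (hx : 0 ≤ x) (hE : exp x ≤ E) (N : ℕ) :
    exp x ≤ ∑ n ∈ Finset.range N, x ^ n / n ! + x ^ N / N ! * E := by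
  have hsum : HasSum (fun n => x ^ n / n !) (exp x) := by
    rw [exp_eq_exp_ℝ]
    exact NormedSpace.expSeries_div_hasSum_exp x
  have hle : ∀ m, x ^ (m + N) / (m + N)! ≤ x ^ N / N ! * (x ^ m / m !) := fun m => by
    rw [div_mul_div_comm, ← pow_add, add_comm N m]
    gcongr
    exact_mod_cast Nat.le_of_dvd (Nat.factorial_pos _)
      (mul_comm N ! m ! ▸ Nat.factorial_mul_factorial_dvd_factorial_add m N)
  have htail := hasSum_le hle ((hasSum_nat_add_iff' N).2 hsum) (hsum.mul_left (x ^ N / N !))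
  have : x ^ N / N ! * exp x ≤ x ^ N / N ! * E := by gcongr
  linarith

/-- Partial sums of `A k (-w) = ∑ₙ wⁿ / (n! (2n + k + 1))`, obtained by expanding `e^{wz²}`. -/
noncomputable def momentSeries (k N : ℕ) (w : ℝ) : ℝ :=
  ∑ n ∈ Finset.range N, w ^ n / (n ! * (2 * n + k + 1))

lemma integral_pow_mul_exp_series_term (k n : ℕ) (w : ℝ) :
    ∫ z in (0:ℝ)..1, z ^ k * ((w * z ^ 2) ^ n / n !) = w ^ n / (n ! * (2 * n + k + 1)) := by
  have h : ∀ z : ℝ, z ^ k * ((w * z ^ 2) ^ n / n !) = w ^ n / n ! * z ^ (2 * n + k) := by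
    intro z
    ring
  simp_rw [h]
  rw [intervalIntegral.integral_const_mul, integral_pow]
  push_cast
  field_simp
  ring

lemma integral_pow_mul_exp_series (k N : ℕ) (w : ℝ) :
    ∫ z in (0:ℝ)..1, z ^ k * ∑ n ∈ Finset.range N, (w * z ^ 2) ^ n / n !
      = momentSeries k N w := by
  simp_rw [Finset.mul_sum]
  rw [intervalIntegral.integral_finsetSum fun n _ =>
    Continuous.intervalIntegrable (by fun_prop) _ _]
  simp only [integral_pow_mul_exp_series_term, momentSeries]

lemma A_neg_eq_integral (k : ℕ) (w : ℝ) :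
    A k (-w) = ∫ z in (0:ℝ)..1, z ^ k * exp (w * z ^ 2) := by
  simp [A]

lemma momentSeries_le_A (k N : ℕ) {w : ℝ} (hw : 0 ≤ w) : momentSeries k N w ≤ A k (-w) := by
  rw [A_neg_eq_integral, ← integral_pow_mul_exp_series]
  refine intervalIntegral.integral_mono_on zero_le_one
    (Continuous.intervalIntegrable (by fun_prop) _ _)
    (Continuous.intervalIntegrable (by fun_prop) _ _) fun z hz => ?_
  have := hz.1
  gcongr
  exact sum_le_exp_of_nonneg (by positivity) N

lemma A_le_momentSeries_add (k N : ℕ) {w E : ℝ} (hw : 0 ≤ w) (hE : exp w ≤ E) :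
    A k (-w) ≤ momentSeries k N w + w ^ N / (N ! * (2 * N + k + 1)) * E := by
  rw [A_neg_eq_integral, ← integral_pow_mul_exp_series, ← integral_pow_mul_exp_series_term,
    ← intervalIntegral.integral_mul_const, ← intervalIntegral.integral_add
      (Continuous.intervalIntegrable (by fun_prop) _ _)
      (Continuous.intervalIntegrable (by fun_prop) _ _)]
  refine intervalIntegral.integral_mono_on zero_le_one
    (Continuous.intervalIntegrable (by fun_prop) _ _)
    (Continuous.intervalIntegrable (by fun_prop) _ _) fun z hz => ?_
  have hz₀ := hz.1
  have hexp : exp (w * z ^ 2) ≤ E := by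
    refine (exp_le_exp.2 ?_).trans hE
    nlinarith [pow_le_one₀ hz.1 hz.2 (n := 2)]
  calc z ^ k * exp (w * z ^ 2)
      ≤ z ^ k * (∑ n ∈ Finset.range N, (w * z ^ 2) ^ n / n ! + (w * z ^ 2) ^ N / N ! * E) := by
        gcongr
        exact exp_le_sum_add_pow_mul (by positivity) hexp N
    _ = _ := by ring

lemma exp_le_of_le_natCast {w : ℝ} {n : ℕ} (h : w ≤ n) : exp w ≤ 2.7182818286 ^ n :=
  calc exp w ≤ exp n := exp_le_exp.2 h
    _ = exp 1 ^ n := by rw [← exp_nat_mul, mul_one]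
    _ ≤ 2.7182818286 ^ n := by gcongr; exact exp_one_lt_d9.le

lemma Q_pos_at_neg_2_16 : 0 < Q (-(54 / 25)) := by
  have hw : (0 : ℝ) ≤ 54 / 25 := by norm_num
  have hE := exp_le_of_le_natCast (n := 3) (w := 54 / 25) (by norm_num)
  have l₀ := momentSeries_le_A 0 14 hw
  have u₀ := A_le_momentSeries_add 0 14 hw hE
  have l₂ := momentSeries_le_A 2 14 hw
  have u₂ := A_le_momentSeries_add 2 14 hw hE
  have l₄ := momentSeries_le_A 4 14 hw
  have u₆ := A_le_momentSeries_add 6 14 hw hE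
  norm_num [momentSeries, Finset.sum_range_succ, Nat.factorial] at l₀ u₀ l₂ u₂ l₄ u₆
  rw [Q, G]
  linarith [mul_le_mul l₀ l₄ (by norm_num) (A_pos 0 _).le,
    mul_le_mul u₀ u₆ (A_pos 6 _).le (by norm_num),
    mul_le_mul u₂ u₂ (A_pos 2 _).le (by norm_num), mul_le_mul l₂ l₄ (by norm_num) (A_pos 2 _).le]

lemma Q_neg_at_neg_2_19 : Q (-(219 / 100)) < 0 := by
  have hw : (0 : ℝ) ≤ 219 / 100 := by norm_num
  have hE := exp_le_of_le_natCast (n := 3) (w := 219 / 100) (by norm_num)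
  have l₀ := momentSeries_le_A 0 14 hw
  have u₀ := A_le_momentSeries_add 0 14 hw hE
  have l₂ := momentSeries_le_A 2 14 hw
  have u₂ := A_le_momentSeries_add 2 14 hw hE
  have u₄ := A_le_momentSeries_add 4 14 hw hE
  have l₆ := momentSeries_le_A 6 14 hw
  norm_num [momentSeries, Finset.sum_range_succ, Nat.factorial] at l₀ u₀ l₂ u₂ u₄ l₆
  rw [Q, G]
  linarith [mul_le_mul u₀ u₄ (A_pos 4 _).le (by norm_num),
    mul_le_mul l₀ l₆ (by norm_num) (A_pos 0 _).le,
    mul_le_mul l₂ l₂ (by norm_num) (A_pos 2 _).le, mul_le_mul u₂ u₄ (A_pos 4 _).le (by norm_num)]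

lemma fifteen_halves_lt_alphaCrit_neg_five : 15 / 2 < alphaCrit (-5) := by
  have hw : (0 : ℝ) ≤ 5 := by norm_num
  have l₀ := momentSeries_le_A 0 26 hw
  have u₂ := A_le_momentSeries_add 2 26 hw (exp_le_of_le_natCast (n := 5) (by norm_num))
  have l₄ := momentSeries_le_A 4 26 hw
  norm_num [momentSeries, Finset.sum_range_succ, Nat.factorial] at l₀ u₂ l₄
  rw [alphaCrit, lt_div_iff₀ (G_pos _), G]
  linarith

/-- The sign-changing `3 - 20t + 20t² = (1/5)(2t-1)²(40t²-40t+15) - 32t²(1-t)²` is a difference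
of nonnegative polynomials, so its weight `e^{wt}` can be bounded by the values at the ends of
`[w₁, w₂]`. -/
lemma quadratic_mul_exp_ge {t w₁ w w₂ : ℝ} (ht : 0 ≤ t) (h₁ : w₁ ≤ w) (h₂ : w ≤ w₂) :
    (3 - 20 * t + 52 * t ^ 2 - 64 * t ^ 3 + 32 * t ^ 4) * exp (w₁ * t)
      - 32 * (t ^ 2 - 2 * t ^ 3 + t ^ 4) * exp (w₂ * t)
      ≤ (3 - 20 * t + 20 * t ^ 2) * exp (w * t) := by
  have hq : 0 ≤ 3 - 20 * t + 52 * t ^ 2 - 64 * t ^ 3 + 32 * t ^ 4 := by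
    have : 0 ≤ 40 * t ^ 2 - 40 * t + 15 := by nlinarith [sq_nonneg (2 * t - 1)]
    have : 0 ≤ (2 * t - 1) ^ 2 * (40 * t ^ 2 - 40 * t + 15) := by positivity
    nlinarith
  have hr : 0 ≤ 32 * (t ^ 2 - 2 * t ^ 3 + t ^ 4) := by nlinarith [sq_nonneg (t - t ^ 2)]
  have e₁ : exp (w₁ * t) ≤ exp (w * t) := exp_le_exp.2 (by nlinarith)
  have e₂ : exp (w * t) ≤ exp (w₂ * t) := exp_le_exp.2 (by nlinarith)
  nlinarith [mul_le_mul_of_nonneg_left e₁ hq, mul_le_mul_of_nonneg_left e₂ hr]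

lemma twenty_thirds_lt_alphaCrit {η : ℝ} (hη : η ∈ Icc (-(219 / 100)) (-(54 / 25))) :
    20 / 3 < alphaCrit η := by
  have hp := integral_listSum_mul_exp [(3, 0), (-20, 2), (20, 4)] η
  have hq := integral_listSum_mul_exp [(3, 0), (-20, 2), (52, 4), (-64, 6), (32, 8)] (-(54 / 25))
  have hr := integral_listSum_mul_exp [(32, 4), (-64, 6), (32, 8)] (-(219 / 100))
  simp only [List.map_cons, List.map_nil, List.sum_cons, List.sum_nil, neg_neg, pow_zero,
    mul_one, add_zero] at hp hq hr
  have hcmp : (∫ z in (0:ℝ)..1,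
        (3 + (-20 * z ^ 2 + (52 * z ^ 4 + (-64 * z ^ 6 + 32 * z ^ 8)))) * exp (54 / 25 * z ^ 2))
      - ∫ z in (0:ℝ)..1, (32 * z ^ 4 + (-64 * z ^ 6 + 32 * z ^ 8)) * exp (219 / 100 * z ^ 2)
      ≤ ∫ z in (0:ℝ)..1, (3 + (-20 * z ^ 2 + 20 * z ^ 4)) * exp (-η * z ^ 2) := by
    rw [← intervalIntegral.integral_sub (Continuous.intervalIntegrable (by fun_prop) _ _)
      (Continuous.intervalIntegrable (by fun_prop) _ _)]
    refine intervalIntegral.integral_mono_on zero_le_one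
      (Continuous.intervalIntegrable (by fun_prop) _ _)
      (Continuous.intervalIntegrable (by fun_prop) _ _) fun z _ => ?_
    convert quadratic_mul_exp_ge (sq_nonneg z) (w₁ := 54 / 25) (w := -η) (w₂ := 219 / 100)
      (by linarith [hη.2]) (by linarith [hη.1]) using 1 <;> ring_nf
  rw [hp, hq, hr] at hcmp
  have hw₁ : (0 : ℝ) ≤ 54 / 25 := by norm_num
  have hE₁ := exp_le_of_le_natCast (n := 3) (w := 54 / 25) (by norm_num)
  have hw₂ : (0 : ℝ) ≤ 219 / 100 := by norm_num
  have hE₂ := exp_le_of_le_natCast (n := 3) (w := 219 / 100) (by norm_num)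
  have l₀ := momentSeries_le_A 0 14 hw₁
  have u₂ := A_le_momentSeries_add 2 14 hw₁ hE₁
  have l₄ := momentSeries_le_A 4 14 hw₁
  have u₆ := A_le_momentSeries_add 6 14 hw₁ hE₁
  have l₈ := momentSeries_le_A 8 14 hw₁
  have u₄' := A_le_momentSeries_add 4 14 hw₂ hE₂
  have l₆' := momentSeries_le_A 6 14 hw₂
  have u₈' := A_le_momentSeries_add 8 14 hw₂ hE₂
  norm_num [momentSeries, Finset.sum_range_succ, Nat.factorial] at l₀ u₂ l₄ u₆ l₈ u₄' l₆' u₈'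
  rw [alphaCrit, lt_div_iff₀ (G_pos _), G]
  linarith

/-- There exists `α* ∈ (20/3, 7.5)` such that for `α* < α < 7.5` the function
`η ↦ B(η, α)` has exactly three zeros (two distinct negative ones and `0`), for
`α = α*` exactly two zeros (one negative and `0`), and for `0 < α < α*` only the
zero `η = 0`. -/
theorem stmt_2 :
    ∃ αs : ℝ, 20 / 3 < αs ∧ αs < 7.5 ∧
      (∀ α : ℝ, αs < α → α < 7.5 →
        ∃ η₁ η₂ : ℝ, η₁ < 0 ∧ η₂ < 0 ∧ η₁ ≠ η₂ ∧
          {η : ℝ | B η α = 0} = ({η₁, η₂, 0} : Set ℝ)) ∧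
      (∃ η₁ : ℝ, η₁ < 0 ∧ {η : ℝ | B η αs = 0} = ({η₁, 0} : Set ℝ)) ∧
      (∀ α : ℝ, 0 < α → α < αs → {η : ℝ | B η α = 0} = ({0} : Set ℝ)) := by
  obtain ⟨e, he, hQe⟩ : ∃ e ∈ Icc (-(219 / 100) : ℝ) (-(54 / 25)), Q e = 0 :=
    intermediate_value_Icc (by norm_num) continuous_Q.continuousOn
      ⟨Q_neg_at_neg_2_19.le, Q_pos_at_neg_2_16.le⟩
  have hanti := alphaCrit_strictAntiOn hQe
  have hmono := alphaCrit_strictMonoOn hQe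
  have he₀ : e < 0 := he.2.trans_lt (by norm_num)
  have hmin : alphaCrit e < 15 / 2 := alphaCrit_zero ▸ hmono self_mem_Ici he₀.le he₀
  have hmin' := twenty_thirds_lt_alphaCrit he
  refine ⟨alphaCrit e, hmin', by norm_num [hmin], fun α hα hα' => ?_, ⟨e, he₀, ?_⟩,
    fun α hα hα' => ?_⟩
  · norm_num at hα'
    obtain ⟨η₁, η₂, -, h₁, h₂, h₂', hset⟩ := exists_setOf_apply_eq_pair_of_valley
      continuous_alphaCrit hanti hmono (by linarith [he.1]) he₀.le hα
      (hα'.trans fifteen_halves_lt_alphaCrit_neg_five) (alphaCrit_zero ▸ hα')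
    refine ⟨η₁, η₂, h₁.trans he₀, h₂', (h₁.trans h₂).ne, ?_⟩
    rw [setOf_B_eq_zero (by linarith), hset, insert_comm, pair_comm]
  · rw [setOf_B_eq_zero (by linarith), setOf_apply_eq_min_of_valley hanti hmono, pair_comm]
  · rw [setOf_B_eq_zero hα, setOf_apply_eq_eq_empty_of_valley hanti hmono hα', insert_empty_eq]
end
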